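/- Let R be a commutative ring and consider a commutative square of cochain complexes of R-modules, i.e. chain maps α : M₀₀ → M₀₁, β : M₀₀ → M₁₀, γ : M₁₀ → M₁₁, δ : M₀₁ → M₁₁ with δ∘α = γ∘β, viewed as a 2-cube M : I² → Ch(R) with M(ε₁,ε₂) = M_{ε₁ε₂}, β and γ the maps in the first coordinate and α and δ the maps in the second coordinate (so C₂M = cone of the induced map cone(β) → cone(δ)). Suppose there exists a chain map s : M₁₁ → M₁₀ such that γ∘s = id_{M₁₁} and such that the map β ⊕ s : M₀₀ ⊕ M₁₁ → M₁₀ (given by β on the first summand and s on the second) is a quasi-isomorphism. Then the total cofiber C₂M is quasi-isomorphic to the suspension M₀₁⟦1⟧. (This is the chain-complex analogue of the paper's Lemma 6.1, stated there for diagrams of symmetric spectra.) -/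

import Mathlib

/-!
The map `M₁₁ ⟶ cone(β)` induced by `s` is a quasi-isomorphism: it factors as
`M₁₁ ⟶ cone(M₀₀ ⟶ M₀₀ ⊞ M₁₁) ⟶ cone(β)`, where the first map is a quasi-isomorphism because the
inclusion `M₀₀ ⟶ M₀₀ ⊞ M₁₁` is split with cokernel `M₁₁`, and the second is induced by
`(𝟙, β ⊕ s)`. Since `s ≫ γ = 𝟙`, it lies over the identity of `cone(δ)` as a map from the
inclusion `M₁₁ ⟶ cone(δ)` to `cone(β) ⟶ cone(δ)`, so it induces a quasi-isomorphism
`cone(M₁₁ ⟶ cone(δ)) ⟶ C₂M`; finally, rotating the triangle of `δ`, the complex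
`cone(M₁₁ ⟶ cone(δ))` is homotopy equivalent to `M₀₁⟦1⟧`.
-/

open CategoryTheory CategoryTheory.Limits CochainComplex

/-- The category `Ch(R)` of cochain complexes of `R`-modules. -/
abbrev Ch (R : Type) [CommRing R] := CochainComplex (ModuleCat R) ℤ

/-- The total cofiber `C₂M` of a commutative square `M` of cochain complexes, with `β, γ`
the maps in the first coordinate and `α, δ` the maps in the second coordinate: the mapping
cone of the induced map `cone(β) → cone(δ)`. -/
noncomputable def totalCofiberSq {R : Type} [CommRing R] {M₀₀ M₁₀ M₀₁ M₁₁ : Ch R}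
    (α : M₀₀ ⟶ M₀₁) (β : M₀₀ ⟶ M₁₀) (γ : M₁₀ ⟶ M₁₁) (δ : M₀₁ ⟶ M₁₁)
    (comm : β ≫ γ = α ≫ δ) : Ch R :=
  mappingCone (mappingCone.map β δ α γ comm)

namespace CochainComplex.mappingCone

section Preadditive

variable {C : Type*} [Category* C] [Preadditive C] [HasBinaryBiproducts C]

lemma inr_map {K₁ L₁ K₂ L₂ : CochainComplex C ℤ} (φ₁ : K₁ ⟶ L₁) (φ₂ : K₂ ⟶ L₂)
    (a : K₁ ⟶ K₂) (b : L₁ ⟶ L₂) (comm : φ₁ ≫ b = a ≫ φ₂) :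
    inr φ₁ ≫ map φ₁ φ₂ a b comm = b ≫ inr φ₂ := by
  simp [map]

end Preadditive

variable {C : Type*} [Category* C] [Abelian C]

lemma quasiIso_map {K₁ L₁ K₂ L₂ : CochainComplex C ℤ} (φ₁ : K₁ ⟶ L₁) (φ₂ : K₂ ⟶ L₂)
    (a : K₁ ⟶ K₂) (b : L₁ ⟶ L₂) (comm : φ₁ ≫ b = a ≫ φ₂) [QuasiIso a] [QuasiIso b] :
    QuasiIso (map φ₁ φ₂ a b comm) := by
  let _ := HasDerivedCategory.standard C
  rw [← DerivedCategory.isIso_Q_map_iff_quasiIso] at *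
  exact Pretriangulated.isIso₃_of_isIso₁₂
    (DerivedCategory.Q.mapTriangle.map (triangleMap φ₁ φ₂ a b comm))
    (DerivedCategory.mappingCone_triangle_distinguished φ₁)
    (DerivedCategory.mappingCone_triangle_distinguished φ₂) ‹_› ‹_›

lemma quasiIso_biprodInr_comp_inr_biprodInl (X Y : CochainComplex C ℤ) :
    QuasiIso (biprod.inr ≫ inr (biprod.inl : X ⟶ X ⊞ Y)) := by
  let S := ShortComplex.mk (biprod.inl : X ⟶ X ⊞ Y) biprod.snd biprod.inl_snd
  have hS : S.ShortExact := (ShortComplex.Splitting.ofHasBinaryBiproduct X Y).shortExact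
  have := quasiIso_descShortComplex hS
  have : QuasiIso ((biprod.inr ≫ inr S.f) ≫ descShortComplex S) := by
    rw [Category.assoc, inr_descShortComplex, biprod.inr_snd]
    infer_instance
  exact quasiIso_of_comp_right _ (descShortComplex S)

lemma quasiIso_comp_inr_of_quasiIso_biprodDesc {X Y Z : CochainComplex C ℤ} (f : X ⟶ Z)
    (s : Y ⟶ Z) [QuasiIso (biprod.desc f s)] : QuasiIso (s ≫ inr f) := by
  have := quasiIso_biprodInr_comp_inr_biprodInl X Y
  have := quasiIso_map biprod.inl f (𝟙 X) (biprod.desc f s) (by simp)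
  have hfactor : s ≫ inr f = (biprod.inr ≫ inr biprod.inl) ≫
      map biprod.inl f (𝟙 X) (biprod.desc f s) (by simp) := by
    rw [Category.assoc, inr_map, biprod.inr_desc_assoc]
  rw [hfactor]
  infer_instance

end CochainComplex.mappingCone

/-- given a commutative square `M` of cochain complexes of `R`-modules as
above, if there is a chain map `s : M₁₁ → M₁₀` with `γ ∘ s = id` and such that
`β ⊕ s : M₀₀ ⊕ M₁₁ → M₁₀` is a quasi-isomorphism, then the total cofiber `C₂M` is
quasi-isomorphic to the suspension `M₀₁⟦1⟧`. -/
theorem stmt_1 {R : Type} [CommRing R] {M₀₀ M₁₀ M₀₁ M₁₁ : Ch R}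
    (α : M₀₀ ⟶ M₀₁) (β : M₀₀ ⟶ M₁₀) (γ : M₁₀ ⟶ M₁₁) (δ : M₀₁ ⟶ M₁₁)
    (comm : β ≫ γ = α ≫ δ)
    (s : M₁₁ ⟶ M₁₀) (hsγ : s ≫ γ = 𝟙 M₁₁)
    (hqi : QuasiIso (biprod.desc β s : M₀₀ ⊞ M₁₁ ⟶ M₁₀)) :
    ∃ (Z : Ch R) (φ : Z ⟶ totalCofiberSq α β γ δ comm) (ψ : Z ⟶ M₀₁⟦(1 : ℤ)⟧),
      QuasiIso φ ∧ QuasiIso ψ := by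
  have := mappingCone.quasiIso_comp_inr_of_quasiIso_biprodDesc β s
  have hsq : mappingCone.inr δ ≫ 𝟙 _ =
      (s ≫ mappingCone.inr β) ≫ mappingCone.map β δ α γ comm := by
    rw [Category.comp_id, Category.assoc, mappingCone.inr_map, reassoc_of% hsγ]
  exact ⟨mappingCone (mappingCone.inr δ), mappingCone.map _ _ _ _ hsq,
    (mappingCone.rotateHomotopyEquiv δ).symm.hom, mappingCone.quasiIso_map _ _ _ _ hsq,
    inferInstance⟩
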